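/- arXiv:2202.05604 — 5 statements merged into one kernel-verified Lean document; each statement's English description precedes it below -/
import Mathlib

section
/- If x : [0,T] → ℝ² is Lipschitz continuous and x(t₀) = 0 for some t₀ ∈ [0,T], then ∫₀ᵀ α/|x(t)| dt = +∞ for any α > 0. -/
/-!
Near its zero `t₀` a `K`-Lipschitz curve satisfies `‖x t‖ ≤ K |t - t₀|`, so the integrand dominates
`(α / K) / |t - t₀|`, whose integral over any nondegenerate interval containing `t₀` diverges.
-/

open MeasureTheory Set
open scoped ENNReal NNReal

theorem lintegral_Icc_inv_edist_eq_top {a b t₀ : ℝ} (hab : a < b) (ht₀ : t₀ ∈ Icc a b) :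
    ∫⁻ t in Icc a b, (edist t t₀)⁻¹ = ∞ := by
  by_contra hfin
  -- Only `≤`: at `t₀` the left side is `‖0⁻¹‖ₑ = 0` since `0⁻¹ = 0` in `ℝ`.
  have henorm_le (t : ℝ) : ‖(t - t₀)⁻¹‖ₑ ≤ (edist t t₀)⁻¹ := by
    rcases eq_or_ne t t₀ with rfl | ht
    · simp
    · rw [enorm_inv (sub_ne_zero.2 ht), edist_dist, Real.dist_eq, Real.enorm_eq_ofReal_abs]
  have hint : IntegrableOn (fun t ↦ (t - t₀)⁻¹) (Icc a b) :=
    ⟨(measurable_id.sub_const t₀).inv.aestronglyMeasurable,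
      (lintegral_mono henorm_le).trans_lt (lt_top_iff_ne_top.2 hfin)⟩
  rcases intervalIntegrable_sub_inv_iff.1
      ((intervalIntegrable_iff_integrableOn_Icc_of_le hab.le).2 hint) with hab' | ht₀'
  · exact hab.ne hab'
  · exact ht₀' (by rwa [uIcc_of_le hab.le])

theorem LipschitzOnWith.setLIntegral_div_enorm_eq_top {α E : Type*} [PseudoMetricSpace α]
    [MeasurableSpace α] [SeminormedAddGroup E] {μ : Measure α} {K : ℝ≥0} {f : α → E}
    {s : Set α} (hf : LipschitzOnWith K f s) (hs : MeasurableSet s) {t₀ : α} (ht₀ : t₀ ∈ s)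
    (hf₀ : f t₀ = 0) {c : ℝ≥0∞} (hc : c ≠ 0) (hdiv : ∫⁻ t in s, (edist t t₀)⁻¹ ∂μ = ∞) :
    ∫⁻ t in s, c / ‖f t‖ₑ ∂μ = ∞ := by
  have hbound : ∀ t ∈ s, c * (K : ℝ≥0∞)⁻¹ * (edist t t₀)⁻¹ ≤ c / ‖f t‖ₑ := fun t ht ↦ by
    have hlip : ‖f t‖ₑ ≤ K * edist t t₀ := by
      simpa only [hf₀, edist_zero_right] using hf ht ht₀
    calc c * (K : ℝ≥0∞)⁻¹ * (edist t t₀)⁻¹ = c / (K * edist t t₀) := by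
          rw [div_eq_mul_inv, ENNReal.mul_inv (Or.inr (edist_ne_top t t₀))
            (Or.inl ENNReal.coe_ne_top), mul_assoc]
      _ ≤ c / ‖f t‖ₑ := ENNReal.div_le_div_left hlip c
  have hcK : c * (K : ℝ≥0∞)⁻¹ ≠ 0 := mul_ne_zero hc (ENNReal.inv_ne_zero.2 ENNReal.coe_ne_top)
  refine eq_top_iff.2 ?_
  calc ∞ = c * (K : ℝ≥0∞)⁻¹ * ∫⁻ t in s, (edist t t₀)⁻¹ ∂μ := by rw [hdiv, ENNReal.mul_top hcK]
    _ ≤ ∫⁻ t in s, c * (K : ℝ≥0∞)⁻¹ * (edist t t₀)⁻¹ ∂μ := lintegral_const_mul_le _ _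
    _ ≤ ∫⁻ t in s, c / ‖f t‖ₑ ∂μ := setLIntegral_mono' hs hbound

/-- If `x : [0,T] → ℝ²` is Lipschitz continuous and vanishes at some `t₀ ∈ [0,T]`, then
`∫₀ᵀ α/‖x(t)‖ dt = +∞` (as a Lebesgue integral with values in `[0,∞]`). -/
theorem integral_inv_norm_of_lipschitz_vanishing (T α K : ℝ) (hT : 0 < T) (hα : 0 < α)
    (x : ℝ → EuclideanSpace ℝ (Fin 2))
    (hx : LipschitzOnWith (Real.toNNReal K) x (Set.Icc 0 T))
    (t₀ : ℝ) (ht₀ : t₀ ∈ Set.Icc 0 T) (hx0 : x t₀ = 0) :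
    ∫⁻ t in Set.Icc 0 T, ENNReal.ofReal α / ENNReal.ofReal ‖x t‖ = ⊤ := by
  simpa only [ofReal_norm] using
    hx.setLIntegral_div_enorm_eq_top measurableSet_Icc ht₀ hx0 (ENNReal.ofReal_pos.2 hα).ne'
      (lintegral_Icc_inv_edist_eq_top hT ht₀)
end

section
/- Suppose u solves d/dt(φ(u̇)) = f(t) on [0,T] with periodic boundary conditions u(0)=u(T), u̇(0)=u̇(T), where φ = ∇F and F is convex. Then u is a global minimum of J(v) = ∫₀ᵀ F(v̇) dt + ∫₀ᵀ ⟨f, v⟩ dt over all T-periodic Lipschitz v with ‖v̇‖_∞ ≤ c. -/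
/-!
The relativistic Lagrangian `L(s) = mc²(1 − √(1 − ‖s‖²/c²))` is convex on the ball `‖s‖ ≤ c`
with gradient the momentum `p(s) = ms/√(1 − ‖s‖²/c²)`, so `L(v̇) ≥ L(u̇) + ⟨p(u̇), v̇ − u̇⟩`
pointwise. Since `d/dt p(u̇) = f`, integrating `⟨p(u̇), v̇ − u̇⟩` by parts against the periodic
path `v − u` gives `−∫⟨f, v − u⟩`, and adding up yields `J(u) ≤ J(v)`.

As `v` is only Lipschitz, the integration by parts is the one for absolutely continuous
functions, applied coordinatewise to `⟨p(u̇), v − u⟩ = ∑ᵢ p(u̇)ᵢ (v − u)ᵢ`.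
-/

open MeasureTheory intervalIntegral Set Filter
open scoped NNReal RealInnerProductSpace Topology

namespace AbsolutelyContinuousOnInterval

variable {F : Type*} [SeminormedAddCommGroup F] {f g : ℝ → F} {a b : ℝ}

theorem congr (hf : AbsolutelyContinuousOnInterval f a b) (h : EqOn f g (uIcc a b)) :
    AbsolutelyContinuousOnInterval g a b := by
  refine hf.congr' (eventually_inf_principal.2 (Eventually.of_forall fun E hE => ?_))
  exact Finset.sum_congr rfl fun i hi => by rw [h (hE.1 i hi).1, h (hE.1 i hi).2]

theorem const (y : F) : AbsolutelyContinuousOnInterval (fun _ => y) a b := by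
  simp [AbsolutelyContinuousOnInterval, tendsto_const_nhds]

theorem finset_sum {ι : Type*} (s : Finset ι) {f : ι → ℝ → F}
    (h : ∀ i ∈ s, AbsolutelyContinuousOnInterval (f i) a b) :
    AbsolutelyContinuousOnInterval (fun t => ∑ i ∈ s, f i t) a b := by
  classical
  induction s using Finset.induction_on with
  | empty => simpa using const 0
  | insert i s hi ih =>
    simp_rw [Finset.sum_insert hi]
    exact (h i (Finset.mem_insert_self i s)).fun_add
      (ih fun j hj => h j (Finset.mem_insert_of_mem hj))

end AbsolutelyContinuousOnInterval

theorem absolutelyContinuousOnInterval_of_hasDerivAt {f f' : ℝ → ℝ} {a b : ℝ}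
    (hf : ∀ x ∈ uIcc a b, HasDerivAt f (f' x) x) (hf' : IntervalIntegrable f' volume a b) :
    AbsolutelyContinuousOnInterval f a b := by
  refine ((AbsolutelyContinuousOnInterval.const (f a)).fun_add
    (hf'.absolutelyContinuousOnInterval_intervalIntegral left_mem_uIcc)).congr fun x hx => ?_
  have hsub : uIcc a x ⊆ uIcc a b := uIcc_subset_uIcc left_mem_uIcc hx
  simp [integral_eq_sub_of_hasDerivAt (fun y hy => hf y (hsub hy)) (hf'.mono_set hsub)]

theorem IntervalIntegrable.inner_continuousOn {E : Type*} [NormedAddCommGroup E]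
    [InnerProductSpace ℝ E] {f g : ℝ → E} {a b : ℝ} (hf : IntervalIntegrable f volume a b)
    (hg : ContinuousOn g (uIcc a b)) : IntervalIntegrable (fun t => ⟪f t, g t⟫) volume a b := by
  obtain ⟨C, hC⟩ := isCompact_uIcc.exists_bound_of_continuousOn hg
  rw [intervalIntegrable_iff] at hf ⊢
  exact (innerSL ℝ).integrable_of_bilin_of_bdd_right C hf
    ((hg.mono uIoc_subset_uIcc).aestronglyMeasurable measurableSet_uIoc)
    ((ae_restrict_iff' measurableSet_uIoc).2 (ae_of_all _ fun t ht => hC t (uIoc_subset_uIcc ht)))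

section EuclideanSpace

variable {ι : Type*} [Fintype ι] {a b : ℝ}

theorem absolutelyContinuousOnInterval_inner {w d : ℝ → EuclideanSpace ℝ ι}
    (hw : ∀ i, AbsolutelyContinuousOnInterval (fun t => w t i) a b)
    (hd : ∀ i, AbsolutelyContinuousOnInterval (fun t => d t i) a b) :
    AbsolutelyContinuousOnInterval (fun t => ⟪w t, d t⟫) a b := by
  simp only [PiLp.inner_apply, RCLike.inner_apply, conj_trivial]
  exact .finset_sum _ fun i _ => (hd i).fun_mul (hw i)

variable {w w' d : ℝ → EuclideanSpace ℝ ι} {K : ℝ≥0}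

theorem absolutelyContinuousOnInterval_inner_of_hasDerivAt_of_lipschitzOnWith
    (hw : ∀ t ∈ uIcc a b, HasDerivAt w (w' t) t) (hw' : IntervalIntegrable w' volume a b)
    (hd : LipschitzOnWith K d (uIcc a b)) :
    AbsolutelyContinuousOnInterval (fun t => ⟪w t, d t⟫) a b := by
  refine absolutelyContinuousOnInterval_inner (fun i => ?_) (fun i => ?_)
  · let π := EuclideanSpace.proj (𝕜 := ℝ) i
    exact absolutelyContinuousOnInterval_of_hasDerivAt
      (fun t ht => π.hasFDerivAt.comp_hasDerivAt t (hw t ht))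
      (intervalIntegrable_iff.2 (π.integrable_comp (intervalIntegrable_iff.1 hw')))
  · exact (((LipschitzWith.eval i).comp (PiLp.lipschitzWith_ofLp 2 _)).comp_lipschitzOnWith
      hd).absolutelyContinuousOnInterval

theorem deriv_inner_ae_eq (hw : ∀ t ∈ uIcc a b, HasDerivAt w (w' t) t)
    (hd : LipschitzOnWith K d (uIcc a b)) :
    deriv (fun t => ⟪w t, d t⟫) =ᵐ[volume.restrict (uIoc a b)]
      fun t => ⟪w t, deriv d t⟫ + ⟪w' t, d t⟫ := by
  rw [EventuallyEq, ae_restrict_iff' measurableSet_uIoc]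
  filter_upwards
    [hd.absolutelyContinuousOnInterval.boundedVariationOn.ae_differentiableAt_of_mem_uIcc]
    with t hdt ht
  exact ((hw t (uIoc_subset_uIcc ht)).inner ℝ (hdt (uIoc_subset_uIcc ht)).hasDerivAt).deriv

theorem intervalIntegrable_inner_deriv_add_inner
    (hw : ∀ t ∈ uIcc a b, HasDerivAt w (w' t) t) (hw' : IntervalIntegrable w' volume a b)
    (hd : LipschitzOnWith K d (uIcc a b)) :
    IntervalIntegrable (fun t => ⟪w t, deriv d t⟫ + ⟪w' t, d t⟫) volume a b :=
  (absolutelyContinuousOnInterval_inner_of_hasDerivAt_of_lipschitzOnWith hw hw' hd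
    ).intervalIntegrable_deriv.congr_ae (deriv_inner_ae_eq hw hd)

theorem integral_inner_deriv_add_inner_eq_sub
    (hw : ∀ t ∈ uIcc a b, HasDerivAt w (w' t) t) (hw' : IntervalIntegrable w' volume a b)
    (hd : LipschitzOnWith K d (uIcc a b)) :
    ∫ t in a..b, ⟪w t, deriv d t⟫ + ⟪w' t, d t⟫ = ⟪w b, d b⟫ - ⟪w a, d a⟫ := by
  rw [← (absolutelyContinuousOnInterval_inner_of_hasDerivAt_of_lipschitzOnWith hw hw' hd
    ).integral_deriv_eq_sub]
  exact (integral_congr_ae_restrict (deriv_inner_ae_eq hw hd)).symm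

end EuclideanSpace

noncomputable section Relativistic

variable {E : Type*} [NormedAddCommGroup E] (m c : ℝ)

def relativisticLagrangian (s : E) : ℝ := m * c ^ 2 * (1 - √(1 - ‖s‖ ^ 2 / c ^ 2))

def relativisticMomentum [NormedSpace ℝ E] (s : E) : E := (m / √(1 - ‖s‖ ^ 2 / c ^ 2)) • s

variable {m c}

theorem continuous_relativisticLagrangian : Continuous (relativisticLagrangian m c : E → ℝ) := by
  unfold relativisticLagrangian
  fun_prop

theorem abs_relativisticLagrangian_le (hm : 0 ≤ m) (s : E) :
    |relativisticLagrangian m c s| ≤ m * c ^ 2 := by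
  have hq : √(1 - ‖s‖ ^ 2 / c ^ 2) ≤ 1 := Real.sqrt_le_one.2 (sub_le_self _ (by positivity))
  have hq0 := Real.sqrt_nonneg (1 - ‖s‖ ^ 2 / c ^ 2)
  have hmc : 0 ≤ m * c ^ 2 := by positivity
  unfold relativisticLagrangian
  exact abs_le.2 ⟨by nlinarith, by nlinarith⟩

theorem intervalIntegrable_relativisticLagrangian_comp (hm : 0 ≤ m) {g : ℝ → E} {a b : ℝ}
    (hg : AEStronglyMeasurable g (volume.restrict (uIoc a b))) :
    IntervalIntegrable (fun t => relativisticLagrangian m c (g t)) volume a b :=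
  (intervalIntegrable_const (c := m * c ^ 2)).mono_fun
    (continuous_relativisticLagrangian.comp_aestronglyMeasurable hg)
    (ae_of_all _ fun _ => (abs_relativisticLagrangian_le hm _).trans (Real.le_norm_self _))

theorem relativisticLagrangian_add_inner_momentum_le [InnerProductSpace ℝ E] (hm : 0 ≤ m)
    {a s : E} (ha : ‖a‖ < c) (hs : ‖s‖ ≤ c) :
    relativisticLagrangian m c a + ⟪relativisticMomentum m c a, s - a⟫ ≤
      relativisticLagrangian m c s := by
  have hc : 0 < c := (norm_nonneg a).trans_lt ha
  have ha' : 0 < 1 - ‖a‖ ^ 2 / c ^ 2 := by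
    rw [sub_pos, div_lt_one (by positivity)]
    exact pow_lt_pow_left₀ ha (norm_nonneg a) two_ne_zero
  have hs' : 0 ≤ 1 - ‖s‖ ^ 2 / c ^ 2 := by
    rw [sub_nonneg, div_le_one (by positivity)]
    exact pow_le_pow_left₀ (norm_nonneg s) hs 2
  unfold relativisticLagrangian relativisticMomentum
  set r := √(1 - ‖a‖ ^ 2 / c ^ 2)
  set q := √(1 - ‖s‖ ^ 2 / c ^ 2)
  have hr : 0 < r := Real.sqrt_pos.2 ha'
  have hr2 : c ^ 2 * r ^ 2 = c ^ 2 - ‖a‖ ^ 2 := by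
    rw [Real.sq_sqrt ha'.le]; field_simp
  have hq2 : c ^ 2 * q ^ 2 = c ^ 2 - ‖s‖ ^ 2 := by
    rw [Real.sq_sqrt hs']; field_simp
  -- AM-GM: `2 (c r c q + ‖a‖ ‖s‖) ≤ (c r)² + (c q)² + ‖a‖² + ‖s‖² = 2 c²`
  have hCS : c ^ 2 * r * q + ⟪a, s⟫ ≤ c ^ 2 := by
    nlinarith [real_inner_le_norm a s, mul_nonneg (sq_nonneg c) (sq_nonneg (r - q)),
      sq_nonneg (‖a‖ - ‖s‖)]
  have key : ⟪a, s⟫ - ‖a‖ ^ 2 ≤ r * (c ^ 2 * (r - q)) := by nlinarith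
  rw [real_inner_smul_left, inner_sub_right, real_inner_self_eq_norm_sq]
  calc m * c ^ 2 * (1 - r) + m / r * (⟪a, s⟫ - ‖a‖ ^ 2)
      ≤ m * c ^ 2 * (1 - r) + m / r * (r * (c ^ 2 * (r - q))) := by gcongr
    _ = m * c ^ 2 * (1 - q) := by field_simp; ring

theorem ae_relativisticLagrangian_add_inner_deriv_sub_le [InnerProductSpace ℝ E]
    [FiniteDimensional ℝ E] (hm : 0 ≤ m) (hc : 0 ≤ c) {a b : ℝ}
    {u u' v : ℝ → E} (hu : ∀ t, HasDerivAt u (u' t) t) (hu' : ∀ t, ‖u' t‖ < c)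
    (hv : LipschitzOnWith c.toNNReal v (Icc a b)) :
    ∀ᵐ t ∂volume.restrict (Icc a b),
      relativisticLagrangian m c (u' t) +
          ⟪relativisticMomentum m c (u' t), deriv (fun s => v s - u s) t⟫ ≤
        relativisticLagrangian m c (deriv v t) := by
  rw [← Measure.restrict_congr_set Ioo_ae_eq_Icc, ae_restrict_iff' measurableSet_Ioo]
  filter_upwards [hv.ae_differentiableWithinAt_of_mem_real] with t hvt ht
  have hnhds : Icc a b ∈ 𝓝 t := Icc_mem_nhds ht.1 ht.2
  have hv_le : ‖deriv v t‖ ≤ c := by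
    simpa [Real.coe_toNNReal _ hc] using norm_deriv_le_of_lipschitzOn hnhds hv
  have hdt : deriv (fun s => v s - u s) t = deriv v t - u' t :=
    (((hvt (Ioo_subset_Icc_self ht)).differentiableAt hnhds).hasDerivAt.sub (hu t)).deriv
  rw [hdt]
  exact relativisticLagrangian_add_inner_momentum_le hm (hu' t) hv_le

end Relativistic

/-- A `C¹` `T`-periodic solution `u` of `d/dt(φ(u̇)) = f(t)` with `‖u̇‖ < c`, where
`φ(s) = ms/√(1 − ‖s‖²/c²) = ∇F(s)` and `F(s) = mc²(1 − √(1 − ‖s‖²/c²))` is convex, is a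
global minimum of `J(v) = ∫₀ᵀ F(v̇) + ∫₀ᵀ ⟨f, v⟩` over all `T`-periodic Lipschitz paths `v`
with speed at most `c`. -/
theorem solution_is_global_minimum (m c T : ℝ) (hm : 0 < m) (hc : 0 < c) (hT : 0 < T)
    (f : ℝ → EuclideanSpace ℝ (Fin 2))
    (hf : IntervalIntegrable f MeasureTheory.volume 0 T)
    (F : EuclideanSpace ℝ (Fin 2) → ℝ)
    (hF : F = fun s => m * c ^ 2 * (1 - Real.sqrt (1 - ‖s‖ ^ 2 / c ^ 2)))
    (φ : EuclideanSpace ℝ (Fin 2) → EuclideanSpace ℝ (Fin 2))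
    (hφ : φ = fun s => (m / Real.sqrt (1 - ‖s‖ ^ 2 / c ^ 2)) • s)
    (J : (ℝ → EuclideanSpace ℝ (Fin 2)) → ℝ)
    (hJ : J = fun v => (∫ t in (0 : ℝ)..T, F (deriv v t))
        + ∫ t in (0 : ℝ)..T, (inner ℝ (f t) (v t) : ℝ))
    (u u' : ℝ → EuclideanSpace ℝ (Fin 2))
    (hu : ∀ t, HasDerivAt u (u' t) t) (hu'cont : Continuous u')
    (hu'lt : ∀ t, ‖u' t‖ < c)
    (huper : u 0 = u T) (hu'per : u' 0 = u' T)
    (hODE : ∀ t, HasDerivAt (fun s => φ (u' s)) (f t) t) :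
    ∀ v : ℝ → EuclideanSpace ℝ (Fin 2),
      LipschitzOnWith (Real.toNNReal c) v (Set.Icc 0 T) → v 0 = v T → J u ≤ J v := by
  intro v hv hvper
  have hF' : F = relativisticLagrangian m c := hF
  have hφ' : φ = relativisticMomentum m c := hφ
  subst hF' hφ' hJ
  have hIcc : uIcc 0 T = Icc 0 T := uIcc_of_le hT.le
  have hu_lip : LipschitzWith c.toNNReal u :=
    lipschitzWith_of_nnnorm_deriv_le (fun t => (hu t).differentiableAt) fun t => by
      rw [(hu t).deriv, ← NNReal.coe_le_coe, coe_nnnorm, Real.coe_toNNReal _ hc.le]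
      exact (hu'lt t).le
  have hw : ∀ t ∈ uIcc 0 T, HasDerivAt (fun s => relativisticMomentum m c (u' s)) (f t) t :=
    fun t _ => hODE t
  have hd := (hIcc ▸ hv).sub hu_lip.lipschitzOnWith
  have hIBP := integral_inner_deriv_add_inner_eq_sub hw hf hd
  rw [← hu'per, huper, hvper, sub_self] at hIBP
  have hpt : ∀ᵐ t ∂volume.restrict (Icc 0 T),
      relativisticLagrangian m c (u' t) + ⟪f t, u t⟫ +
        (⟪relativisticMomentum m c (u' t), deriv (fun s => v s - u s) t⟫ + ⟪f t, v t - u t⟫) ≤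
      relativisticLagrangian m c (deriv v t) + ⟪f t, v t⟫ := by
    filter_upwards [ae_relativisticLagrangian_add_inner_deriv_sub_le hm.le hc.le hu hu'lt hv]
      with t ht
    rw [inner_sub_right]
    linarith
  have hLu : IntervalIntegrable (fun t => relativisticLagrangian m c (u' t)) volume 0 T :=
    intervalIntegrable_relativisticLagrangian_comp hm.le hu'cont.aestronglyMeasurable
  have hfu := hf.inner_continuousOn hu_lip.continuous.continuousOn
  have hI := intervalIntegrable_inner_deriv_add_inner hw hf hd
  have hLv : IntervalIntegrable (fun t => relativisticLagrangian m c (deriv v t)) volume 0 T :=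
    intervalIntegrable_relativisticLagrangian_comp hm.le (measurable_deriv v).aestronglyMeasurable
  have hfv := hf.inner_continuousOn (hIcc ▸ hv.continuousOn)
  have hmono := integral_mono_ae_restrict hT.le ((hLu.add hfu).add hI) (hLv.add hfv) hpt
  rw [integral_add (hLu.add hfu) hI, integral_add hLu hfu, integral_add hLv hfv, hIBP] at hmono
  beta_reduce
  rw [show deriv u = u' from funext fun t => (hu t).deriv]
  linarith
end

section
/- The path x_C(t) = R e^{iωt} with R = L√(L²c² − α²)/(mαc) and ω = mα²c/(L²√(L²c² − α²)) (for L > α/c) solves the relativistic Kepler equation d/dt( m ẋ/√(1 − |ẋ|²/c²) ) = −α x/|x|³. -/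
/-! A circular orbit is an exact solution because its speed, hence its Lorentz factor `γ`, is
constant: the equation collapses to the balance `γ m R ω² = α / R²` between the relativistic
centripetal force and the attraction. For the given `R`, `ω` one has `R ω = α / L`, so
`γ = L c / √(L²c² − α²)`, and the balance becomes an algebraic identity. -/

open Complex

theorem hasDerivAt_cexp_ofReal_mul_I (ω t : ℝ) :
    HasDerivAt (fun s : ℝ => cexp ((ω * s : ℝ) * I)) (ω * I * cexp ((ω * t : ℝ) * I)) t := by
  have h : HasDerivAt (fun s : ℝ => ((ω * s : ℝ) : ℂ) * I) (ω * I) t := by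
    simpa using ((hasDerivAt_id t).const_mul ω).ofReal_comp.mul_const I
  simpa [mul_comm] using h.cexp

theorem hasDerivAt_circle (R ω t : ℝ) :
    HasDerivAt (fun s : ℝ => (R : ℂ) * cexp ((ω * s : ℝ) * I))
      ((R * ω : ℝ) * I * cexp ((ω * t : ℝ) * I)) t := by
  refine ((hasDerivAt_cexp_ofReal_mul_I ω t).const_mul (R : ℂ)).congr_deriv ?_
  push_cast
  ring

theorem hasDerivAt_circle_velocity (v ω t : ℝ) :
    HasDerivAt (fun s : ℝ => (v : ℂ) * I * cexp ((ω * s : ℝ) * I))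
      (-(v * ω : ℝ) * cexp ((ω * t : ℝ) * I)) t := by
  refine ((hasDerivAt_cexp_ofReal_mul_I ω t).const_mul ((v : ℂ) * I)).congr_deriv ?_
  push_cast
  linear_combination (v : ℂ) * ω * cexp (ω * t * I) * Complex.I_mul_I

theorem norm_ofReal_mul_cexp_ofReal_mul_I (R θ : ℝ) : ‖(R : ℂ) * cexp (θ * I)‖ = |R| := by
  rw [norm_mul, norm_exp_ofReal_mul_I, norm_real, Real.norm_eq_abs, mul_one]

theorem norm_ofReal_mul_I_mul_cexp_ofReal_mul_I (v θ : ℝ) :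
    ‖(v : ℂ) * I * cexp (θ * I)‖ = |v| := by
  rw [norm_mul, norm_mul, norm_exp_ofReal_mul_I, norm_I, norm_real, Real.norm_eq_abs,
    mul_one, mul_one]

theorem circle_solves_kepler_of_force_balance {m c α R ω : ℝ} (hR : 0 < R)
    (hbalance : m / √(1 - (R * ω) ^ 2 / c ^ 2) * (R * ω) * ω = α / R ^ 2) (t : ℝ) :
    HasDerivAt (fun s => ((m / √(1 - ‖((R * ω : ℝ) : ℂ) * I * cexp ((ω * s : ℝ) * I)‖ ^ 2
          / c ^ 2) : ℝ) : ℂ) * (((R * ω : ℝ) : ℂ) * I * cexp ((ω * s : ℝ) * I)))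
      (-(α : ℂ) * ((R : ℂ) * cexp ((ω * t : ℝ) * I)) /
        ((‖(R : ℂ) * cexp ((ω * t : ℝ) * I)‖ ^ 3 : ℝ) : ℂ)) t := by
  set γ := m / √(1 - (R * ω) ^ 2 / c ^ 2)
  simp only [norm_ofReal_mul_I_mul_cexp_ofReal_mul_I, norm_ofReal_mul_cexp_ofReal_mul_I,
    sq_abs, abs_of_pos hR]
  convert (hasDerivAt_circle_velocity (R * ω) ω t).const_mul (γ : ℂ) using 1
  · ext s
    ring
  · have hbalanceC : (γ : ℂ) * (R * ω) * ω = α / R ^ 2 := by exact_mod_cast hbalance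
    have hRC : (R : ℂ) ≠ 0 := ofReal_ne_zero.mpr hR.ne'
    push_cast
    calc -(α : ℂ) * (R * cexp (ω * t * I)) / R ^ 3 = -(α / R ^ 2) * cexp (ω * t * I) := by
          field_simp
      _ = γ * (-(R * ω * ω) * cexp (ω * t * I)) := by rw [← hbalanceC]; ring

section KeplerOrbit

variable {m c α L : ℝ}

theorem kepler_radius_mul_frequency (hm : m ≠ 0) (hc : c ≠ 0) {s : ℝ} (hs : s ≠ 0) :
    L * s / (m * α * c) * (m * α ^ 2 * c / (L ^ 2 * s)) = α / L := by
  field_simp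

theorem sqrt_one_sub_sq_div_sq_eq (hc : 0 < c) (hL : 0 < L) :
    √(1 - (α / L) ^ 2 / c ^ 2) = √(L ^ 2 * c ^ 2 - α ^ 2) / (L * c) := by
  have hLc : 0 < L * c := mul_pos hL hc
  rw [show 1 - (α / L) ^ 2 / c ^ 2 = (L ^ 2 * c ^ 2 - α ^ 2) / (L * c) ^ 2 by field_simp,
    Real.sqrt_div' _ (sq_nonneg _), Real.sqrt_sq hLc.le]

end KeplerOrbit

/-- The circular path `x_C(t) = R e^{iωt}` with `R = L√(L²c² − α²)/(mαc)` and
`ω = mα²c/(L²√(L²c² − α²))` (for `L > α/c`) solves the relativistic Kepler equation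
`d/dt( m ẋ/√(1 − |ẋ|²/c²) ) = −α x/|x|³`; in particular its speed `Rω` is less than `c`. -/
theorem circular_path_solves_kepler (m c α L : ℝ) (hm : 0 < m) (hc : 0 < c) (hα : 0 < α)
    (hL : α / c < L) :
    let R : ℝ := L * Real.sqrt (L ^ 2 * c ^ 2 - α ^ 2) / (m * α * c)
    let ω : ℝ := m * α ^ 2 * c / (L ^ 2 * Real.sqrt (L ^ 2 * c ^ 2 - α ^ 2))
    let x : ℝ → ℂ := fun t => (R : ℂ) * Complex.exp ((ω * t : ℝ) * Complex.I)
    let x' : ℝ → ℂ := fun t => (R * ω : ℝ) * Complex.I * Complex.exp ((ω * t : ℝ) * Complex.I)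
    R * ω < c ∧
    (∀ t, HasDerivAt x (x' t) t) ∧
    (∀ t, HasDerivAt (fun s => ((m / Real.sqrt (1 - ‖x' s‖ ^ 2 / c ^ 2) : ℝ) : ℂ) * x' s)
        (-(α : ℂ) * x t / ((‖x t‖ ^ 3 : ℝ) : ℂ)) t) := by
  intro R ω x x'
  have hαL : α < L * c := (div_lt_iff₀ hc).mp hL
  have hL0 : 0 < L := (div_pos hα hc).trans hL
  have hs : 0 < √(L ^ 2 * c ^ 2 - α ^ 2) := Real.sqrt_pos.mpr (by nlinarith)
  have hR : 0 < R := by positivity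
  have hRω : R * ω = α / L := kepler_radius_mul_frequency hm.ne' hc.ne' hs.ne'
  refine ⟨?_, hasDerivAt_circle R ω, circle_solves_kepler_of_force_balance hR ?_⟩
  · rwa [hRω, div_lt_iff₀ hL0, mul_comm]
  · rw [hRω, sqrt_one_sub_sq_div_sq_eq hc hL0]
    simp only [R, ω]
    field_simp
end

section
/- Let T_* = 2πα/(mc³) and for integers 1 ≤ n < k define u^k_n = n k³ (k² − n²)^{−3/2} T_*. Then the energy–angular momentum pair (h, L) with L² = (α²/c²)·k²/(k² − n²) and m²c⁴ − h² = (2π α m² c³ n / T)^{2/3} belongs to the set Σ = {0 < h < mc², α²/c² < L² < α²m²c²/(m²c⁴ − h²)} if and only if T > u^k_n. -/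
/-!
Write `B = (2παm²c³n/T)^{2/3}`, so that `h² = m²c⁴ - B` and `L² = (α²/c²) r` with
`r = k²/(k² - n²) > 1`. Then `α²/c² < L²` and `h < mc²` hold automatically, and the upper bound
on `L²` reads `B < m²c⁴/r`, which already forces `B < m²c⁴`, i.e. `h > 0`. Raising
`B < m²c⁴/r` to the power `3/2` makes it linear in `1/T`, and solving for `T` gives `T > u^k_n`.
-/

open Real

lemma rpow_two_thirds_lt_iff {x y : ℝ} (hx : 0 ≤ x) (hy : 0 ≤ y) :
    x ^ ((2:ℝ)/3) < y ↔ x < y ^ ((3:ℝ)/2) := by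
  rw [show (2:ℝ)/3 = ((3:ℝ)/2)⁻¹ by norm_num]
  exact rpow_inv_lt_iff_of_pos hx hy (by norm_num)

lemma sq_rpow_three_halves {x : ℝ} (hx : 0 ≤ x) : (x ^ 2) ^ ((3:ℝ)/2) = x ^ 3 := by
  rw [← rpow_natCast x 2, ← rpow_mul hx]
  norm_num

lemma sq_div_rpow_three_halves {μ k E : ℝ} (hμ : 0 ≤ μ) (hk : 0 ≤ k) (hE : 0 ≤ E) :
    (μ ^ 2 / (k ^ 2 / E)) ^ ((3:ℝ)/2) = μ ^ 3 * E ^ ((3:ℝ)/2) / k ^ 3 := by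
  rw [div_rpow (by positivity) (by positivity), div_rpow (by positivity) hE,
    sq_rpow_three_halves hμ, sq_rpow_three_halves hk]
  field_simp

/-- `Σ` in the variables `μ = mc²`, `a = α²/c²`, `L² = a r`, `h² = μ² - B`. -/
lemma mem_sigma_iff {μ a B r : ℝ} (hμ : 0 < μ) (ha : 0 < a) (hB : 0 < B) (hr : 1 < r) :
    (0 < √(μ ^ 2 - B) ∧ √(μ ^ 2 - B) < μ ∧ a < a * r ∧
        a * r < a * μ ^ 2 / (μ ^ 2 - √(μ ^ 2 - B) ^ 2)) ↔ B < μ ^ 2 / r := by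
  have hr0 : 0 < r := by linarith
  rw [lt_div_iff₀ hr0]
  constructor
  · rintro ⟨hpos, -, -, hL⟩
    rw [sqrt_pos] at hpos
    rw [sq_sqrt hpos.le, sub_sub_cancel, mul_div_assoc, mul_lt_mul_iff_right₀ ha,
      lt_div_iff₀ hB] at hL
    linarith
  · intro hBr
    have hBμ : B < μ ^ 2 := by nlinarith
    refine ⟨sqrt_pos.2 (by linarith), (sqrt_lt' hμ).2 (by linarith),
      lt_mul_of_one_lt_right ha hr, ?_⟩
    rw [sq_sqrt (by linarith), sub_sub_cancel, mul_div_assoc, mul_lt_mul_iff_right₀ ha,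
      lt_div_iff₀ hB]
    linarith

lemma div_rpow_two_thirds_lt_iff {C T μ k E : ℝ} (hC : 0 ≤ C) (hT : 0 < T) (hμ : 0 < μ)
    (hk : 0 < k) (hE : 0 < E) :
    (C / T) ^ ((2:ℝ)/3) < μ ^ 2 / (k ^ 2 / E) ↔ T > k ^ 3 / E ^ ((3:ℝ)/2) * (C / μ ^ 3) := by
  have hS : 0 < E ^ ((3:ℝ)/2) := rpow_pos_of_pos hE _
  rw [rpow_two_thirds_lt_iff (by positivity) (by positivity),
    sq_div_rpow_three_halves hμ.le hk.le hE.le, gt_iff_lt, div_lt_iff₀ hT,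
    div_mul_div_comm, div_lt_iff₀ (by positivity), div_mul_eq_mul_div,
    lt_div_iff₀ (by positivity)]
  constructor <;> intro h <;> linarith

theorem energy_momentum_in_sigma_iff_general (m c α T : ℝ) (hm : 0 < m) (hc : 0 < c) (hα : 0 < α)
    (hT : 0 < T) (k n : ℕ) (hn : 1 ≤ n) (hnk : n ≤ k - 1) :
    let h : ℝ := Real.sqrt (m ^ 2 * c ^ 4 - (2 * π * α * m ^ 2 * c ^ 3 * n / T) ^ ((2:ℝ)/3))
    let L2 : ℝ := α ^ 2 / c ^ 2 * (k ^ 2 / ((k : ℝ) ^ 2 - (n : ℝ) ^ 2))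
    (0 < h ∧ h < m * c ^ 2 ∧ α ^ 2 / c ^ 2 < L2 ∧
        L2 < α ^ 2 * m ^ 2 * c ^ 2 / (m ^ 2 * c ^ 4 - h ^ 2)) ↔
      T > (n : ℝ) * (k : ℝ) ^ 3 / ((k : ℝ) ^ 2 - (n : ℝ) ^ 2) ^ ((3:ℝ)/2)
        * (2 * π * α / (m * c ^ 3)) := by
  intro h L2
  have hn0 : (0 : ℝ) < n := by exact_mod_cast hn
  have hnk' : (n : ℝ) < k := by exact_mod_cast (by omega : n < k)
  have hE : (0 : ℝ) < (k : ℝ) ^ 2 - (n : ℝ) ^ 2 := by nlinarith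
  have hr : 1 < (k : ℝ) ^ 2 / ((k : ℝ) ^ 2 - (n : ℝ) ^ 2) := by
    rw [one_lt_div hE]; nlinarith
  have hsigma := mem_sigma_iff (mul_pos hm (pow_pos hc 2)) (by positivity : 0 < α ^ 2 / c ^ 2)
    (rpow_pos_of_pos (by positivity : 0 < 2 * π * α * m ^ 2 * c ^ 3 * n / T) ((2:ℝ)/3)) hr
  have hperiod := div_rpow_two_thirds_lt_iff (C := 2 * π * α * m ^ 2 * c ^ 3 * n) (k := k)
    (by positivity) hT (mul_pos hm (pow_pos hc 2)) (by linarith) hE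
  rw [show α ^ 2 / c ^ 2 * (m * c ^ 2) ^ 2 = α ^ 2 * m ^ 2 * c ^ 2 by field_simp] at hsigma
  rw [show (m * c ^ 2) ^ 2 = m ^ 2 * c ^ 4 by ring] at hsigma hperiod
  rw [hsigma, hperiod]
  congr! 1
  field_simp

/-- The energy–angular momentum pair `(h, L)` of a candidate `(n,k)`-type solution, given by
`L² = (α²/c²)·k²/(k² − n²)` and `h = √(m²c⁴ − (2παm²c³n/T)^{2/3})`, belongs to the set
`Σ = {0 < h < mc², α²/c² < L² < α²m²c²/(m²c⁴ − h²)}` if and only if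
`T > u^k_n = nk³(k² − n²)^{−3/2}·(2πα/(mc³))`. -/
theorem energy_momentum_in_sigma_iff (m c α T : ℝ) (hm : 0 < m) (hc : 0 < c) (hα : 0 < α)
    (hT : 0 < T) (k n : ℕ) (hk : 2 ≤ k) (hn : 1 ≤ n) (hnk : n ≤ k - 1) :
    let h : ℝ := Real.sqrt (m ^ 2 * c ^ 4 - (2 * π * α * m ^ 2 * c ^ 3 * n / T) ^ ((2:ℝ)/3))
    let L2 : ℝ := α ^ 2 / c ^ 2 * (k ^ 2 / ((k : ℝ) ^ 2 - (n : ℝ) ^ 2))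
    (0 < h ∧ h < m * c ^ 2 ∧ α ^ 2 / c ^ 2 < L2 ∧
        L2 < α ^ 2 * m ^ 2 * c ^ 2 / (m ^ 2 * c ^ 4 - h ^ 2)) ↔
      T > (n : ℝ) * (k : ℝ) ^ 3 / ((k : ℝ) ^ 2 - (n : ℝ) ^ 2) ^ ((3:ℝ)/2)
        * (2 * π * α / (m * c ^ 3)) :=
  energy_momentum_in_sigma_iff_general m c α T hm hc hα hT k n hn hnk
end

section
/- If T > n k³ (k² − n²)^{−3/2} · 2πα/(mc³) for an integer n with 1 ≤ n ≤ k − 1, then ζ(n) = m^{2/3}c² n² + (2πα/T)^{2/3} k² n^{2/3} − m^{2/3}c² k² < 0. Consequently the action levels I^k_n = mc²T + (2πα/c)√(k² − n²) − (T/c)(m^{2/3}c² − (2παn/T)^{2/3})^{3/2} satisfy I^k_1 ≤ I^k_2 ≤ ⋯ ≤ I^k_{i_T} whenever T > u^k_{i_T}. -/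
/-!
Write `q = 2πα/T` and `A = m^{2/3} c²`, so that `ζ(s) = A s² + q^{2/3} k² s^{2/3} − A k²` and
`I^k_s = m c² T + (T/c) (q √(k² − s²) − (A − (q s)^{2/3})^{3/2})` for real `s`.
Raising `T > u^k_{i_T}` to the power `2/3` turns it into `ζ(i_T) < 0`, and `ζ` is increasing on
`s ≥ 0`, so `ζ < 0` on `[0, i_T]`. Differentiating the bracket in `I^k_s` and squaring, its
derivative has the sign of `−ζ(s)`, so `s ↦ I^k_s` is increasing on `[0, i_T]`.
-/

open Real Set

namespace RelativisticKepler

noncomputable def zeta (A B K s : ℝ) : ℝ :=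
  A * s ^ 2 + B * K ^ 2 * s ^ ((2:ℝ)/3) - A * K ^ 2

noncomputable def action (q A K s : ℝ) : ℝ :=
  q * √(K ^ 2 - s ^ 2) - (A - (q * s) ^ ((2:ℝ)/3)) ^ ((3:ℝ)/2)

noncomputable def actionDeriv (q A K s : ℝ) : ℝ :=
  (q * s) ^ ((2:ℝ)/3) / s * √(A - (q * s) ^ ((2:ℝ)/3)) - q * s / √(K ^ 2 - s ^ 2)

lemma rpow_two_thirds_pow_three {x : ℝ} (hx : 0 ≤ x) : (x ^ ((2:ℝ)/3)) ^ 3 = x ^ 2 := by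
  rw [← rpow_mul_natCast hx]; norm_num

lemma pow_three_rpow_two_thirds {x : ℝ} (hx : 0 ≤ x) : (x ^ 3) ^ ((2:ℝ)/3) = x ^ 2 := by
  rw [← rpow_natCast, ← rpow_mul hx]; norm_num

section Zeta

variable {A B K s : ℝ}

lemma zeta_monotoneOn (hA : 0 ≤ A) (hB : 0 ≤ B) : MonotoneOn (zeta A B K) (Ici 0) := by
  intro x hx y hy hxy
  have h23 : x ^ ((2:ℝ)/3) ≤ y ^ ((2:ℝ)/3) := rpow_le_rpow hx hxy (by norm_num)
  unfold zeta
  gcongr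

lemma sq_lt_sq_of_zeta_neg (hA : 0 ≤ A) (hB : 0 ≤ B) (hs : 0 ≤ s) (h : zeta A B K s < 0) :
    s ^ 2 < K ^ 2 := by
  by_contra! hKs
  have : 0 ≤ B * K ^ 2 * s ^ ((2:ℝ)/3) := by positivity
  unfold zeta at h
  nlinarith

lemma mul_rpow_lt_of_zeta_neg (hA : 0 ≤ A) (hB : 0 ≤ B) (hs : 0 ≤ s) (h : zeta A B K s < 0) :
    B * s ^ ((2:ℝ)/3) < A := by
  have hK : 0 < K ^ 2 := (sq_nonneg s).trans_lt (sq_lt_sq_of_zeta_neg hA hB hs h)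
  unfold zeta at h
  by_contra! hA'
  nlinarith [mul_nonneg hA (sq_nonneg s)]

lemma zeta_neg_of_lt {a q : ℝ} (ha : 0 < a) (hq : 0 < q) (hs : 0 ≤ s) (hsK : s < K)
    (h : q * s * K ^ 3 < a * (K ^ 2 - s ^ 2) ^ ((3:ℝ)/2)) :
    zeta (a ^ ((2:ℝ)/3)) (q ^ ((2:ℝ)/3)) K s < 0 := by
  have hK : 0 < K := hs.trans_lt hsK
  have hD : 0 < K ^ 2 - s ^ 2 := by nlinarith
  have h23 := rpow_lt_rpow (by positivity) h (by norm_num : (0:ℝ) < 2/3)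
  rw [mul_rpow (by positivity) (by positivity), mul_rpow hq.le hs, pow_three_rpow_two_thirds hK.le,
    mul_rpow ha.le (by positivity), ← rpow_mul hD.le] at h23
  unfold zeta
  norm_num at h23
  linear_combination h23

end Zeta

section Action

variable {q A K s : ℝ}

lemma continuous_action (q A K : ℝ) : Continuous (action q A K) := by
  unfold action
  fun_prop (disch := norm_num)

lemma hasDerivAt_action (hq : 0 < q) (hs : 0 < s) (hsK : s ^ 2 < K ^ 2) :
    HasDerivAt (action q A K) (actionDeriv q A K s) s := by
  have hD : HasDerivAt (fun x => K ^ 2 - x ^ 2) (-(2 * s)) s := by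
    simpa using (hasDerivAt_pow 2 s).const_sub (K ^ 2)
  have hlin : HasDerivAt (fun x => q * x) q s := by
    simpa using (hasDerivAt_id s).const_mul q
  have hpow := hlin.rpow_const (p := (2:ℝ)/3) (Or.inl (by positivity))
  have hV := (hpow.const_sub A).rpow_const (p := (3:ℝ)/2) (Or.inr (by norm_num))
  refine (((hD.sqrt (by linarith)).const_mul q).sub hV).congr_deriv ?_
  rw [actionDeriv, rpow_sub_one (by positivity), show (3:ℝ)/2 - 1 = 1/2 by norm_num,
    ← sqrt_eq_rpow]
  field_simp
  ring

lemma actionDeriv_nonneg (hq : 0 < q) (hA : 0 ≤ A) (hs : 0 < s)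
    (h : zeta A (q ^ ((2:ℝ)/3)) K s < 0) : 0 ≤ actionDeriv q A K s := by
  have hB : 0 ≤ q ^ ((2:ℝ)/3) := by positivity
  have hsK := sq_lt_sq_of_zeta_neg hA hB hs.le h
  have huA := mul_rpow_lt_of_zeta_neg hA hB hs.le h
  unfold zeta at h
  unfold actionDeriv
  rw [← mul_rpow hq.le hs.le] at huA
  rw [mul_comm _ (K ^ 2), mul_assoc, ← mul_rpow hq.le hs.le] at h
  set u := (q * s) ^ ((2:ℝ)/3)
  have hu : 0 < u := by positivity
  have hu3 : u ^ 3 = (q * s) ^ 2 := rpow_two_thirds_pow_three (by positivity)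
  have hW : 0 < √(K ^ 2 - s ^ 2) := sqrt_pos.2 (by linarith)
  have hV : 0 < √(A - u) := sqrt_pos.2 (by linarith)
  rw [sub_nonneg, div_le_iff₀ hW, div_mul_eq_mul_div, div_mul_eq_mul_div, le_div_iff₀ hs]
  refine le_of_pow_le_pow_left₀ two_ne_zero (by positivity) ?_
  rw [mul_pow (u * _), mul_pow u, sq_sqrt (by linarith), sq_sqrt (by linarith)]
  -- `u²(A − u)(K² − s²) − (q s²)² = −u² ζ(s)`, since `(q s)² = u³`
  nlinarith [mul_pos (pow_pos hu 2) (by linarith : 0 < A * (K ^ 2 - s ^ 2) - K ^ 2 * u)]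

lemma action_monotoneOn {b : ℝ} (hq : 0 < q) (hA : 0 ≤ A)
    (hb : zeta A (q ^ ((2:ℝ)/3)) K b < 0) : MonotoneOn (action q A K) (Icc 0 b) := by
  have hB : 0 ≤ q ^ ((2:ℝ)/3) := by positivity
  have hζ : ∀ s ∈ Ioo 0 b, zeta A (q ^ ((2:ℝ)/3)) K s < 0 := fun s hs =>
    (zeta_monotoneOn hA hB hs.1.le (hs.1.trans hs.2).le hs.2.le).trans_lt hb
  refine monotoneOn_of_hasDerivWithinAt_nonneg (f' := actionDeriv q A K) (convex_Icc 0 b)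
    (continuous_action q A K).continuousOn (fun s hs => ?_) (fun s hs => ?_) <;>
    rw [interior_Icc] at hs
  · exact (hasDerivAt_action hq hs.1
      (sq_lt_sq_of_zeta_neg hA hB hs.1.le (hζ s hs))).hasDerivWithinAt
  · exact actionDeriv_nonneg hq hA hs.1 (hζ s hs)

end Action

end RelativisticKepler

open RelativisticKepler

theorem action_levels_increasing_general (m c α T : ℝ) (hm : 0 < m) (hc : 0 < c) (hα : 0 < α)
    (hT : 0 < T) (k iT : ℕ) (hk : 2 ≤ k) (hiTk : iT ≤ k - 1)
    (u : ℕ → ℝ)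
    (hu : u = fun n : ℕ => (n : ℝ) * (k : ℝ) ^ 3 / ((k : ℝ) ^ 2 - (n : ℝ) ^ 2) ^ ((3:ℝ)/2)
        * (2 * π * α / (m * c ^ 3)))
    (ζ : ℝ → ℝ)
    (hζ : ζ = fun s => m ^ ((2:ℝ)/3) * c ^ 2 * s ^ 2
        + (2 * π * α / T) ^ ((2:ℝ)/3) * (k : ℝ) ^ 2 * s ^ ((2:ℝ)/3)
        - m ^ ((2:ℝ)/3) * c ^ 2 * (k : ℝ) ^ 2)
    (I : ℕ → ℝ)
    (hI : I = fun n : ℕ => m * c ^ 2 * T + (2 * π * α / c) * Real.sqrt ((k : ℝ) ^ 2 - (n : ℝ) ^ 2)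
        - (T / c) * (m ^ ((2:ℝ)/3) * c ^ 2 - (2 * π * α * (n : ℝ) / T) ^ ((2:ℝ)/3)) ^ ((3:ℝ)/2))
    (hTbig : T > u iT) :
    (∀ n : ℕ, 1 ≤ n → n ≤ iT → ζ (n : ℝ) < 0) ∧
    (∀ n : ℕ, 1 ≤ n → n + 1 ≤ iT → I n ≤ I (n + 1)) := by
  subst hu hζ
  have hq : 0 < 2 * π * α / T := by positivity
  have hA : 0 ≤ m ^ ((2:ℝ)/3) * c ^ 2 := by positivity
  have hiT : (iT : ℝ) < k := by exact_mod_cast (by omega : iT < k)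
  have hζ_iT : zeta (m ^ ((2:ℝ)/3) * c ^ 2) ((2 * π * α / T) ^ ((2:ℝ)/3)) k iT < 0 := by
    rw [← pow_three_rpow_two_thirds hc.le, ← mul_rpow hm.le (by positivity)]
    refine zeta_neg_of_lt (by positivity) hq (by positivity) hiT ?_
    have hD : 0 < ((k : ℝ) ^ 2 - (iT : ℝ) ^ 2) ^ ((3:ℝ)/2) := rpow_pos_of_pos (by nlinarith) _
    dsimp only at hTbig
    rw [gt_iff_lt, div_mul_div_comm, div_lt_iff₀ (by positivity)] at hTbig
    rw [div_mul_eq_mul_div, div_mul_eq_mul_div, div_lt_iff₀ hT]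
    linear_combination hTbig
  have hI_eq (j : ℕ) :
      I j = m * c ^ 2 * T + T / c * action (2 * π * α / T) (m ^ ((2:ℝ)/3) * c ^ 2) k j := by
    subst hI
    dsimp only
    rw [action, show 2 * π * α * (j : ℝ) / T = 2 * π * α / T * j by ring]
    field_simp
    ring
  refine ⟨fun n _ hn => ?_, fun n _ hn => ?_⟩
  · exact (zeta_monotoneOn hA (by positivity) (mem_Ici.2 n.cast_nonneg)
      (mem_Ici.2 iT.cast_nonneg) (by exact_mod_cast hn)).trans_lt hζ_iT
  · rw [hI_eq, hI_eq]
    gcongr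
    push_cast
    exact action_monotoneOn hq hA hζ_iT ⟨by positivity, by exact_mod_cast (by omega : n ≤ iT)⟩
      ⟨by positivity, by exact_mod_cast hn⟩ (by linarith)

/-- If `T > u^k_{i_T}` then `ζ(n) < 0` for all `1 ≤ n ≤ i_T`, and consequently the action
levels `I^k_n` of the non-circular solutions are increasing in `n`:
`I^k_1 ≤ I^k_2 ≤ ⋯ ≤ I^k_{i_T}`. -/
theorem action_levels_increasing (m c α T : ℝ) (hm : 0 < m) (hc : 0 < c) (hα : 0 < α)
    (hT : 0 < T) (k iT : ℕ) (hk : 2 ≤ k) (hiT : 1 ≤ iT) (hiTk : iT ≤ k - 1)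
    (u : ℕ → ℝ)
    (hu : u = fun n : ℕ => (n : ℝ) * (k : ℝ) ^ 3 / ((k : ℝ) ^ 2 - (n : ℝ) ^ 2) ^ ((3:ℝ)/2)
        * (2 * π * α / (m * c ^ 3)))
    (ζ : ℝ → ℝ)
    (hζ : ζ = fun s => m ^ ((2:ℝ)/3) * c ^ 2 * s ^ 2
        + (2 * π * α / T) ^ ((2:ℝ)/3) * (k : ℝ) ^ 2 * s ^ ((2:ℝ)/3)
        - m ^ ((2:ℝ)/3) * c ^ 2 * (k : ℝ) ^ 2)
    (I : ℕ → ℝ)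
    (hI : I = fun n : ℕ => m * c ^ 2 * T + (2 * π * α / c) * Real.sqrt ((k : ℝ) ^ 2 - (n : ℝ) ^ 2)
        - (T / c) * (m ^ ((2:ℝ)/3) * c ^ 2 - (2 * π * α * (n : ℝ) / T) ^ ((2:ℝ)/3)) ^ ((3:ℝ)/2))
    (hTbig : T > u iT) :
    (∀ n : ℕ, 1 ≤ n → n ≤ iT → ζ (n : ℝ) < 0) ∧
    (∀ n : ℕ, 1 ≤ n → n + 1 ≤ iT → I n ≤ I (n + 1)) :=
  action_levels_increasing_general m c α T hm hc hα hT k iT hk hiTk u hu ζ hζ I hI hTbig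
end
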